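/- arXiv:1908.01696 — 7 statements merged into one kernel-verified Lean document; each statement's English description precedes it below -/
import Mathlib

section
/- (Generalized log-sum inequality) Let a_1, ..., a_n and b_1, ..., b_n be positive real numbers with a = Σ a_i and b = Σ b_i. Then for parameters 0 < k ≤ 1/2 and any r, Σ_{i=1}^n a_i (a_i/b_i)^(r-k) ln_{k,r}(a_i/b_i) ≥ a (a/b)^(r-k) ln_{k,r}(a/b). -/
/-! Writing `g x = (2k)⁻¹ (x - x^(1-2k))`, one has `x · x^(r-k) · ln_{k,r} x = g x`, so
`a · (a/b)^(r-k) · ln_{k,r}(a/b) = b · g(a/b)`: both sides of the inequality are values of the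
perspective of `g`. Since `g` is convex for `0 < k ≤ 1/2`, Jensen's inequality with weights `b i`
at the points `a i / b i` gives the claim. -/

/-- Two-parameter deformed logarithm: `ln_{k,r}(x) = (x^(2k) - 1) / (2k x^(r+k))`. -/
noncomputable def lnkr (k r x : ℝ) : ℝ := (x ^ (2 * k) - 1) / (2 * k * x ^ (r + k))

open Finset Real Set

theorem ConvexOn.sum_mul_map_div_sum_le {ι : Type*} {s : Finset ι} {D : Set ℝ} {f : ℝ → ℝ}
    (hf : ConvexOn ℝ D f) {a b : ι → ℝ} (hb : ∀ i ∈ s, 0 < b i) (hD : ∀ i ∈ s, a i / b i ∈ D) :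
    (∑ i ∈ s, b i) * f ((∑ i ∈ s, a i) / ∑ i ∈ s, b i) ≤ ∑ i ∈ s, b i * f (a i / b i) := by
  rcases s.eq_empty_or_nonempty with rfl | hs
  · simp
  have hB : 0 < ∑ i ∈ s, b i := sum_pos hb hs
  have hcenter : s.centerMass b (fun i ↦ a i / b i) = (∑ i ∈ s, a i) / ∑ i ∈ s, b i := by
    rw [centerMass, smul_eq_mul, inv_mul_eq_div]
    congr 1
    exact sum_congr rfl fun i hi ↦ mul_div_cancel₀ _ (hb i hi).ne'
  have hjensen := hf.map_centerMass_le (fun i hi ↦ (hb i hi).le) hB hD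
  rw [hcenter, centerMass, smul_eq_mul, le_inv_mul_iff₀ hB] at hjensen
  simpa using hjensen

theorem convexOn_sub_rpow {p : ℝ} (hp0 : 0 ≤ p) (hp1 : p ≤ 1) :
    ConvexOn ℝ (Ici 0) fun x : ℝ ↦ x - x ^ p :=
  (convexOn_id (convex_Ici 0)).sub (concaveOn_rpow hp0 hp1)

theorem mul_rpow_mul_lnkr {k : ℝ} (r : ℝ) (hk : k ≠ 0) {x : ℝ} (hx : 0 < x) :
    x * x ^ (r - k) * lnkr k r x = (2 * k)⁻¹ * (x - x ^ (1 - 2 * k)) := by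
  have hsplit : x * x ^ (r - k) = x ^ (r + k) * x ^ (1 - 2 * k) := by
    rw [mul_comm, ← rpow_add_one hx.ne', ← rpow_add hx]; ring_nf
  have hcancel : x ^ (1 - 2 * k) * x ^ (2 * k) = x := by
    rw [← rpow_add hx]; simp
  have : x ^ (r + k) ≠ 0 := (rpow_pos_of_pos hx _).ne'
  unfold lnkr
  rw [hsplit]
  field_simp
  ring_nf at hcancel ⊢
  linear_combination hcancel

theorem mul_div_rpow_mul_lnkr_div {k : ℝ} (r : ℝ) (hk : k ≠ 0) {a b : ℝ} (ha : 0 < a)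
    (hb : 0 < b) :
    a * (a / b) ^ (r - k) * lnkr k r (a / b) =
      b * ((2 * k)⁻¹ * (a / b - (a / b) ^ (1 - 2 * k))) := by
  rw [← mul_rpow_mul_lnkr r hk (div_pos ha hb), ← mul_assoc, ← mul_assoc, mul_div_cancel₀ _ hb.ne']

theorem log_sum_inequality_general (n : ℕ) (a b : Fin n → ℝ)
    (ha : ∀ i, 0 < a i) (hb : ∀ i, 0 < b i) (k r : ℝ) (hk0 : 0 < k) (hk : k ≤ 1 / 2) :
    (∑ i, a i) * ((∑ i, a i) / (∑ i, b i)) ^ (r - k) * lnkr k r ((∑ i, a i) / (∑ i, b i)) ≤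
      ∑ i, a i * (a i / b i) ^ (r - k) * lnkr k r (a i / b i) := by
  rcases isEmpty_or_nonempty (Fin n) with _ | _
  · simp
  have hA : 0 < ∑ i, a i := sum_pos (fun i _ ↦ ha i) univ_nonempty
  have hB : 0 < ∑ i, b i := sum_pos (fun i _ ↦ hb i) univ_nonempty
  have hconvex : ConvexOn ℝ (Ici 0) fun x : ℝ ↦ (2 * k)⁻¹ * (x - x ^ (1 - 2 * k)) :=
    (convexOn_sub_rpow (by linarith) (by linarith)).smul (by positivity)
  rw [mul_div_rpow_mul_lnkr_div r hk0.ne' hA hB,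
    sum_congr rfl fun i _ ↦ mul_div_rpow_mul_lnkr_div r hk0.ne' (ha i) (hb i)]
  exact hconvex.sum_mul_map_div_sum_le (fun i _ ↦ hb i) fun i _ ↦ (div_pos (ha i) (hb i)).le

theorem log_sum_inequality (n : ℕ) (hn : 0 < n) (a b : Fin n → ℝ)
    (ha : ∀ i, 0 < a i) (hb : ∀ i, 0 < b i) (k r : ℝ) (hk0 : 0 < k) (hk : k ≤ 1 / 2) :
    (∑ i, a i) * ((∑ i, a i) / (∑ i, b i)) ^ (r - k) * lnkr k r ((∑ i, a i) / (∑ i, b i)) ≤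
      ∑ i, a i * (a i / b i) ^ (r - k) * lnkr k r (a i / b i) :=
  log_sum_inequality_general n a b ha hb k r hk0 hk
end

section
/- (Conditional entropy for independent variables) If X and Y are independent random variables on finite sets, i.e. the joint distribution satisfies p(x,y) = p(x)p(y), then the generalized Tsallis conditional entropy satisfies S_{k,r}(Y|X) = S_{k,r}(Y) - 2k S_{k,r}(X) S_{k,r}(Y). -/
theorem conditional_entropy_of_independent {X Y : Type*} [Fintype X] [Fintype Y]
    (p : X → Y → ℝ) (hp : ∀ x y, 0 < p x y) (hsum : ∑ x, ∑ y, p x y = 1)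
    (k r : ℝ) (hk0 : 0 < k) (hk : k ≤ 1 / 2) (hr : 0 < r)
    (hind : ∀ x y, p x y = (∑ y', p x y') * (∑ x', p x' y)) :
    -∑ x, ∑ y, (∑ y', p x y') ^ (2 * k + 1) *
        (p x y / ∑ y', p x y') ^ (r + k + 1) * lnkr k r (p x y / ∑ y', p x y') =
      (-∑ y, (∑ x', p x' y) ^ (r + k + 1) * lnkr k r (∑ x', p x' y)) -
        2 * k * (-∑ x, (∑ y', p x y') ^ (r + k + 1) * lnkr k r (∑ y', p x y')) *
          (-∑ y, (∑ x', p x' y) ^ (r + k + 1) * lnkr k r (∑ x', p x' y)) := by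
  have hYne : Nonempty Y := by
    by_contra h
    rw [not_nonempty_iff] at h
    simp at hsum
  have hXne : Nonempty X := by
    by_contra h
    rw [not_nonempty_iff] at h
    simp at hsum
  have hk2 : (2 : ℝ) * k ≠ 0 := by positivity
  have hpx : ∀ x, 0 < ∑ y', p x y' :=
    fun x => Finset.sum_pos (fun y _ => hp x y) Finset.univ_nonempty
  have hpy : ∀ y, 0 < ∑ x', p x' y :=
    fun y => Finset.sum_pos (fun x _ => hp x y) Finset.univ_nonempty
  have hdiv : ∀ x y, p x y / ∑ y', p x y' = ∑ x', p x' y := by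
    intro x y
    rw [hind x y, mul_comm, mul_div_assoc, div_self (hpx x).ne', mul_one]
  have key : ∀ a : ℝ, 0 < a →
      a ^ (r + k + 1) * lnkr k r a = (a ^ (2 * k + 1) - a) / (2 * k) := by
    intro a ha
    have h1 : a ^ (r + k + 1) = a ^ (r + k) * a := by
      rw [Real.rpow_add ha, Real.rpow_one]
    have h2 : a ^ (2 * k + 1) = a ^ (2 * k) * a := by
      rw [Real.rpow_add ha, Real.rpow_one]
    have hne : a ^ (r + k) ≠ 0 := (Real.rpow_pos_of_pos ha _).ne'
    unfold lnkr
    rw [h1, h2]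
    field_simp
  have hsumpy : ∑ y, ∑ x', p x' y = 1 := by rw [Finset.sum_comm]; exact hsum
  have hSY : ∑ y, (∑ x', p x' y) ^ (r + k + 1) * lnkr k r (∑ x', p x' y)
      = ((∑ y, (∑ x', p x' y) ^ (2 * k + 1)) - 1) / (2 * k) := by
    rw [Finset.sum_congr rfl (fun y _ => key _ (hpy y)), ← Finset.sum_div,
      Finset.sum_sub_distrib, hsumpy]
  have hSX : ∑ x, (∑ y', p x y') ^ (r + k + 1) * lnkr k r (∑ y', p x y')
      = ((∑ x, (∑ y', p x y') ^ (2 * k + 1)) - 1) / (2 * k) := by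
    rw [Finset.sum_congr rfl (fun x _ => key _ (hpx x)), ← Finset.sum_div,
      Finset.sum_sub_distrib, hsum]
  have hL : ∑ x, ∑ y, (∑ y', p x y') ^ (2 * k + 1) *
        (p x y / ∑ y', p x y') ^ (r + k + 1) * lnkr k r (p x y / ∑ y', p x y')
      = (∑ x, (∑ y', p x y') ^ (2 * k + 1)) *
        (((∑ y, (∑ x', p x' y) ^ (2 * k + 1)) - 1) / (2 * k)) := by
    rw [← hSY, Finset.sum_mul_sum]
    refine Finset.sum_congr rfl fun x _ => Finset.sum_congr rfl fun y _ => ?_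
    rw [hdiv x y, mul_assoc]
  rw [hL, hSX, hSY]
  field_simp
  ring
end

section
/- (Chain rule) For any joint distribution p(x,y) on a finite product X × Y with all marginals positive, the generalized Tsallis joint entropy satisfies S_{k,r}(X,Y) = S_{k,r}(X) + S_{k,r}(Y|X), where S_{k,r}(X,Y) = -Σ_{x,y} p(x,y)^(r+k+1) ln_{k,r}(p(x,y)), S_{k,r}(X) = -Σ_x p(x)^(r+k+1) ln_{k,r}(p(x)) with p(x) = Σ_y p(x,y), and S_{k,r}(Y|X) = -Σ_{x,y} p(x)^(2k+1) p(y|x)^(r+k+1) ln_{k,r}(p(y|x)) with p(y|x) = p(x,y)/p(x). -/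
lemma lnkr_key (k r a : ℝ) (hk : k ≠ 0) (ha : 0 < a) :
    a ^ (r + k + 1) * lnkr k r a = (a ^ (2 * k + 1) - a) / (2 * k) := by
  unfold lnkr
  have h1 : a ^ (r + k + 1) = a ^ (r + k) * a := by
    rw [Real.rpow_add ha, Real.rpow_one]
  have h2 : a ^ (2 * k + 1) = a ^ (2 * k) * a := by
    rw [Real.rpow_add ha, Real.rpow_one]
  have h3 : a ^ (r + k) ≠ 0 := (Real.rpow_pos_of_pos ha _).ne'
  rw [h1, h2]
  field_simp [hk, h3]

theorem chain_rule {X Y : Type*} [Fintype X] [Fintype Y]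
    (p : X → Y → ℝ) (hp : ∀ x y, 0 < p x y) (hsum : ∑ x, ∑ y, p x y = 1)
    (k r : ℝ) (hk : k ≠ 0) :
    -∑ x, ∑ y, (p x y) ^ (r + k + 1) * lnkr k r (p x y) =
      (-∑ x, (∑ y', p x y') ^ (r + k + 1) * lnkr k r (∑ y', p x y')) +
        (-∑ x, ∑ y, (∑ y', p x y') ^ (2 * k + 1) *
          (p x y / ∑ y', p x y') ^ (r + k + 1) * lnkr k r (p x y / ∑ y', p x y')) := by
  rw [← neg_add, ← Finset.sum_add_distrib, neg_inj]
  refine Finset.sum_congr rfl fun x _ => ?_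
  set q : ℝ := ∑ y', p x y' with hqdef
  have hY : Nonempty Y := by
    by_contra h
    rw [not_nonempty_iff] at h
    simp at hsum
  have hq : 0 < q := Finset.sum_pos (fun y _ => hp x y) Finset.univ_nonempty
  -- rewrite each summand
  have hL : ∀ y, p x y ^ (r + k + 1) * lnkr k r (p x y)
      = (p x y ^ (2 * k + 1) - p x y) / (2 * k) := fun y => lnkr_key k r _ hk (hp x y)
  have hC : ∀ y, q ^ (2 * k + 1) * (p x y / q) ^ (r + k + 1) * lnkr k r (p x y / q)
      = (p x y ^ (2 * k + 1) - q ^ (2 * k) * p x y) / (2 * k) := by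
    intro y
    have hc : 0 < p x y / q := div_pos (hp x y) hq
    rw [mul_assoc, lnkr_key k r _ hk hc]
    have e1 : q ^ (2 * k + 1) * (p x y / q) ^ (2 * k + 1) = p x y ^ (2 * k + 1) := by
      rw [← Real.mul_rpow hq.le hc.le, mul_div_cancel₀ _ hq.ne']
    have e2 : q ^ (2 * k + 1) * (p x y / q) = q ^ (2 * k) * p x y := by
      have : q ^ (2 * k + 1) = q ^ (2 * k) * q := by
        rw [Real.rpow_add hq, Real.rpow_one]
      rw [this]
      field_simp
    rw [← mul_div_assoc, mul_sub, e1, e2]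
  simp only [hL, hC]
  have hs1 : ∑ y, q ^ (2 * k) * p x y = q ^ (2 * k + 1) := by
    rw [← Finset.mul_sum, ← hqdef, Real.rpow_add hq, Real.rpow_one]
  rw [lnkr_key k r q hk hq]
  rw [← Finset.sum_div, ← Finset.sum_div, Finset.sum_sub_distrib, Finset.sum_sub_distrib,
    hs1, ← hqdef]
  ring
end

section
/- (Conditioning reduces entropy) For any joint distribution p(x,y) on a finite product with all probabilities positive, and parameters 0 < k ≤ 1/2, r > 0, the generalized Tsallis conditional entropy satisfies S_{k,r}(Y|X) ≤ S_{k,r}(Y). -/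
open Finset

lemma rpow_mul_lnkr {k t : ℝ} (r : ℝ) (hk : 0 < k) (ht : 0 < t) :
    t ^ (r + k + 1) * lnkr k r t = (t ^ (2 * k + 1) - t) / (2 * k) := by
  have hpow : t ^ (r + k) ≠ 0 := (Real.rpow_pos_of_pos ht _).ne'
  rw [lnkr, Real.rpow_add ht (r + k), Real.rpow_add ht (2 * k), Real.rpow_one]
  field_simp

lemma neg_sum_rpow_mul_lnkr {ι : Type*} [Fintype ι] {k : ℝ} (r : ℝ) (hk : 0 < k)
    {v : ι → ℝ} (hv : ∀ i, 0 < v i) (hsum : ∑ i, v i = 1) :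
    -∑ i, v i ^ (r + k + 1) * lnkr k r (v i) = (1 - ∑ i, v i ^ (2 * k + 1)) / (2 * k) := by
  simp only [rpow_mul_lnkr r hk (hv _), ← sum_div, sum_sub_distrib, hsum]
  ring

lemma sum_rpow_le_one {ι : Type*} [Fintype ι] {α : ℝ} (hα : 1 ≤ α) {v : ι → ℝ}
    (hv : ∀ i, 0 ≤ v i) (hsum : ∑ i, v i = 1) : ∑ i, v i ^ α ≤ 1 := by
  have hv1 (i : ι) : v i ≤ 1 := hsum ▸ single_le_sum (fun j _ => hv j) (mem_univ i)
  calc ∑ i, v i ^ α ≤ ∑ i, v i :=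
        sum_le_sum fun i _ => Real.rpow_le_self_of_le_one (hv i) (hv1 i) hα
    _ = 1 := hsum

lemma sum_rpow_sum_mul_le {X Y : Type*} [Fintype X] [Fintype Y] {α : ℝ} (hα : 1 ≤ α)
    {w : X → ℝ} (hw : ∀ x, 0 ≤ w x) (hwsum : ∑ x, w x = 1) {q : X → Y → ℝ}
    (hq : ∀ x y, 0 ≤ q x y) :
    ∑ y, (∑ x, w x * q x y) ^ α ≤ ∑ x, w x * ∑ y, q x y ^ α := by
  have jensen (y : Y) : (∑ x, w x * q x y) ^ α ≤ ∑ x, w x * q x y ^ α :=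
    (convexOn_rpow hα).map_sum_le (fun x _ => hw x) hwsum fun x _ => Set.mem_Ici.2 (hq x y)
  calc ∑ y, (∑ x, w x * q x y) ^ α ≤ ∑ y, ∑ x, w x * q x y ^ α :=
        sum_le_sum fun y _ => jensen y
    _ = ∑ x, w x * ∑ y, q x y ^ α := by rw [sum_comm]; simp only [mul_sum]

lemma sum_rpow_mul_one_sub_le {X Y : Type*} [Fintype X] [Fintype Y] {α : ℝ} (hα : 1 ≤ α)
    {w : X → ℝ} (hw : ∀ x, 0 ≤ w x) (hwsum : ∑ x, w x = 1) {q : X → Y → ℝ}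
    (hq : ∀ x y, 0 ≤ q x y) (hqsum : ∀ x, ∑ y, q x y = 1) :
    ∑ x, w x ^ α * (1 - ∑ y, q x y ^ α) ≤ 1 - ∑ y, (∑ x, w x * q x y) ^ α := by
  have hw1 (x : X) : w x ≤ 1 := hwsum ▸ single_le_sum (fun x _ => hw x) (mem_univ x)
  calc ∑ x, w x ^ α * (1 - ∑ y, q x y ^ α) ≤ ∑ x, w x * (1 - ∑ y, q x y ^ α) :=
        sum_le_sum fun x _ => mul_le_mul_of_nonneg_right
          (Real.rpow_le_self_of_le_one (hw x) (hw1 x) hα)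
          (sub_nonneg.2 (sum_rpow_le_one hα (hq x) (hqsum x)))
    _ = 1 - ∑ x, w x * ∑ y, q x y ^ α := by
        simp only [mul_sub, mul_one, sum_sub_distrib, hwsum]
    _ ≤ 1 - ∑ y, (∑ x, w x * q x y) ^ α :=
        sub_le_sub_left (sum_rpow_sum_mul_le hα hw hwsum hq) 1

theorem conditioning_reduces_entropy_general {X Y : Type*} [Fintype X] [Fintype Y]
    (p : X → Y → ℝ) (hp : ∀ x y, 0 < p x y) (hsum : ∑ x, ∑ y, p x y = 1)
    (k r : ℝ) (hk0 : 0 < k) :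
    -∑ x, ∑ y, (∑ y', p x y') ^ (2 * k + 1) *
        (p x y / ∑ y', p x y') ^ (r + k + 1) * lnkr k r (p x y / ∑ y', p x y') ≤
      -∑ y, (∑ x', p x' y) ^ (r + k + 1) * lnkr k r (∑ x', p x' y) := by
  have hX : Nonempty X := by
    by_contra h; simp [not_nonempty_iff.1 h] at hsum
  have hY : Nonempty Y := by
    by_contra h; simp [not_nonempty_iff.1 h] at hsum
  set P : X → ℝ := fun x => ∑ y, p x y
  set q : X → Y → ℝ := fun x y => p x y / P x
  have hP (x : X) : 0 < P x := sum_pos (fun y _ => hp x y) univ_nonempty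
  have hq (x : X) (y : Y) : 0 < q x y := div_pos (hp x y) (hP x)
  have hqsum (x : X) : ∑ y, q x y = 1 := by rw [← sum_div, div_self (hP x).ne']
  have hmixture (y : Y) : ∑ x, p x y = ∑ x, P x * q x y :=
    sum_congr rfl fun x _ => (mul_div_cancel₀ _ (hP x).ne').symm
  have hmarginal : ∑ y, ∑ x, p x y = 1 := sum_comm.trans hsum
  calc -∑ x, ∑ y, P x ^ (2 * k + 1) * q x y ^ (r + k + 1) * lnkr k r (q x y)
      = ∑ x, P x ^ (2 * k + 1) * -∑ y, q x y ^ (r + k + 1) * lnkr k r (q x y) := by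
        simp only [mul_assoc, ← mul_sum, mul_neg, sum_neg_distrib]
    _ = (∑ x, P x ^ (2 * k + 1) * (1 - ∑ y, q x y ^ (2 * k + 1))) / (2 * k) := by
        simp only [neg_sum_rpow_mul_lnkr r hk0 (hq _) (hqsum _), mul_div_assoc', sum_div]
    _ ≤ (1 - ∑ y, (∑ x, P x * q x y) ^ (2 * k + 1)) / (2 * k) := by
        gcongr
        exact sum_rpow_mul_one_sub_le (by linarith) (fun x => (hP x).le) hsum
          (fun x y => (hq x y).le) hqsum
    _ = -∑ y, (∑ x', p x' y) ^ (r + k + 1) * lnkr k r (∑ x', p x' y) := by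
        rw [neg_sum_rpow_mul_lnkr r hk0 (fun y => sum_pos (fun x _ => hp x y) univ_nonempty)
          hmarginal]
        simp only [hmixture]

theorem conditioning_reduces_entropy {X Y : Type*} [Fintype X] [Fintype Y]
    (p : X → Y → ℝ) (hp : ∀ x y, 0 < p x y) (hsum : ∑ x, ∑ y, p x y = 1)
    (k r : ℝ) (hk0 : 0 < k) (hk : k ≤ 1 / 2) (hr : 0 < r) :
    -∑ x, ∑ y, (∑ y', p x y') ^ (2 * k + 1) *
        (p x y / ∑ y', p x y') ^ (r + k + 1) * lnkr k r (p x y / ∑ y', p x y') ≤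
      -∑ y, (∑ x', p x' y) ^ (r + k + 1) * lnkr k r (∑ x', p x' y) :=
  conditioning_reduces_entropy_general p hp hsum k r hk0
end

section
/- (Subadditivity) For any joint distribution p(x,y) on a finite product with all probabilities positive, and parameters 0 < k ≤ 1/2, r > 0, the generalized Tsallis entropy satisfies S_{k,r}(X,Y) ≤ S_{k,r}(X) + S_{k,r}(Y). -/
theorem subadditivity {X Y : Type*} [Fintype X] [Fintype Y]
    (p : X → Y → ℝ) (hp : ∀ x y, 0 < p x y) (hsum : ∑ x, ∑ y, p x y = 1)
    (k r : ℝ) (hk0 : 0 < k) (hk : k ≤ 1 / 2) (hr : 0 < r) :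
    -∑ x, ∑ y, (p x y) ^ (r + k + 1) * lnkr k r (p x y) ≤
      (-∑ x, (∑ y', p x y') ^ (r + k + 1) * lnkr k r (∑ y', p x y')) +
        (-∑ y, (∑ x', p x' y) ^ (r + k + 1) * lnkr k r (∑ x', p x' y)) := by
  classical
  set q : ℝ := 2 * k + 1 with hq
  have hq1 : (1 : ℝ) ≤ q := by rw [hq]; linarith
  set P : X → ℝ := fun x => ∑ y, p x y with hP
  set Q : Y → ℝ := fun y => ∑ x, p x y with hQ
  have hX : Nonempty X := by
    by_contra h
    rw [not_nonempty_iff] at h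
    simp [Finset.univ_eq_empty] at hsum
  have hY : Nonempty Y := by
    by_contra h
    rw [not_nonempty_iff] at h
    simp [hP, Finset.univ_eq_empty] at hsum
  have hPpos : ∀ x, 0 < P x := fun x =>
    Finset.sum_pos (fun y _ => hp x y) Finset.univ_nonempty
  have hQpos : ∀ y, 0 < Q y := fun y =>
    Finset.sum_pos (fun x _ => hp x y) Finset.univ_nonempty
  have hPsum : ∑ x, P x = 1 := hsum
  have hQsum : ∑ y, Q y = 1 := by rw [hQ]; rw [Finset.sum_comm]; exact hsum
  have hPle1 : ∀ x, P x ≤ 1 := by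
    intro x
    rw [← hPsum]
    exact Finset.single_le_sum (fun x' _ => (hPpos x').le) (Finset.mem_univ x)
  have hQle1 : ∀ y, Q y ≤ 1 := by
    intro y
    rw [← hQsum]
    exact Finset.single_le_sum (fun y' _ => (hQpos y').le) (Finset.mem_univ y)
  -- step A : simplify each summand
  have key : ∀ t : ℝ, 0 < t → t ^ (r + k + 1) * lnkr k r t = (t ^ q - t) / (2 * k) := by
    intro t ht
    unfold lnkr
    have h1 : t ^ (r + k + 1) = t ^ (r + k) * t := by
      rw [Real.rpow_add ht, Real.rpow_one]
    have h2 : t ^ q = t ^ (2 * k) * t := by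
      rw [hq, Real.rpow_add ht, Real.rpow_one]
    have h3 : (t : ℝ) ^ (r + k) ≠ 0 := ne_of_gt (Real.rpow_pos_of_pos ht _)
    rw [h1, h2]
    field_simp
  have rpow_le_self : ∀ t : ℝ, 0 < t → t ≤ 1 → t ^ q ≤ t := by
    intro t ht ht1
    calc t ^ q ≤ t ^ (1 : ℝ) := Real.rpow_le_rpow_of_exponent_ge ht ht1 hq1
      _ = t := Real.rpow_one t
  -- conditional distribution
  set c : X → Y → ℝ := fun x y => p x y / P x with hc
  have hcpos : ∀ x y, 0 < c x y := fun x y => div_pos (hp x y) (hPpos x)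
  have hcsum : ∀ x, ∑ y, c x y = 1 := by
    intro x
    rw [hc]
    simp only
    rw [← Finset.sum_div]
    exact div_self (hPpos x).ne'
  have hcle1 : ∀ x y, c x y ≤ 1 := by
    intro x y
    rw [← hcsum x]
    exact Finset.single_le_sum (fun y' _ => (hcpos x y').le) (Finset.mem_univ y)
  set T : X → ℝ := fun x => ∑ y, (c x y) ^ q with hT
  have hT0 : ∀ x, 0 ≤ T x :=
    fun x => Finset.sum_nonneg fun y _ => (Real.rpow_pos_of_pos (hcpos x y) q).le
  have hT1 : ∀ x, T x ≤ 1 := by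
    intro x
    calc T x ≤ ∑ y, c x y :=
          Finset.sum_le_sum fun y _ => rpow_le_self _ (hcpos x y) (hcle1 x y)
      _ = 1 := hcsum x
  have hpc : ∀ x y, p x y = P x * c x y := by
    intro x y
    rw [hc]
    simp only
    rw [mul_comm, div_mul_cancel₀ _ (hPpos x).ne']
  have hpq : ∀ x y, (p x y) ^ q = P x ^ q * (c x y) ^ q := by
    intro x y
    rw [hpc x y, Real.mul_rpow (hPpos x).le (hcpos x y).le]
  set A : ℝ := ∑ x, ∑ y, (p x y) ^ q with hA
  set B : ℝ := ∑ x, (P x) ^ q with hB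
  set C : ℝ := ∑ y, (Q y) ^ q with hC
  have hA' : A = ∑ x, P x ^ q * T x := by
    rw [hA]
    refine Finset.sum_congr rfl fun x _ => ?_
    rw [hT]
    simp only
    rw [Finset.mul_sum]
    exact Finset.sum_congr rfl fun y _ => hpq x y
  have hCle : C ≤ ∑ x, P x * T x := by
    have step : ∀ y, Q y ^ q ≤ ∑ x, P x * (c x y) ^ q := by
      intro y
      have hQy : Q y = ∑ x, P x * c x y := by
        rw [hQ]
        exact Finset.sum_congr rfl fun x _ => hpc x y
      rw [hQy]
      exact Real.rpow_arith_mean_le_arith_mean_rpow Finset.univ P (fun x => c x y)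
        (fun x _ => (hPpos x).le) hPsum (fun x _ => (hcpos x y).le) hq1
    calc C ≤ ∑ y, ∑ x, P x * (c x y) ^ q := Finset.sum_le_sum fun y _ => step y
      _ = ∑ x, P x * T x := by
        rw [Finset.sum_comm]
        exact Finset.sum_congr rfl fun x _ => by rw [hT]; simp only; rw [Finset.mul_sum]
  have main : B + C ≤ 1 + A := by
    have pw : ∀ x, P x ^ q + P x * T x ≤ P x + P x ^ q * T x := by
      intro x
      have h1 : P x ^ q * (1 - T x) ≤ P x * (1 - T x) :=
        mul_le_mul_of_nonneg_right (rpow_le_self _ (hPpos x) (hPle1 x))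
          (by linarith [hT1 x])
      nlinarith
    have : ∑ x, (P x ^ q + P x * T x) ≤ ∑ x, (P x + P x ^ q * T x) :=
      Finset.sum_le_sum fun x _ => pw x
    rw [Finset.sum_add_distrib, Finset.sum_add_distrib] at this
    rw [hPsum] at this
    calc B + C ≤ B + ∑ x, P x * T x := by linarith [hCle]
      _ ≤ 1 + ∑ x, P x ^ q * T x := by linarith
      _ = 1 + A := by rw [hA']
  -- now rewrite the goal
  have e1 : ∑ x, ∑ y, (p x y) ^ (r + k + 1) * lnkr k r (p x y) = (A - 1) / (2 * k) := by
    have h1 : ∑ x, ∑ y, (p x y) ^ (r + k + 1) * lnkr k r (p x y)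
        = ∑ x, ∑ y, ((p x y) ^ q - p x y) / (2 * k) :=
      Finset.sum_congr rfl fun x _ => Finset.sum_congr rfl fun y _ => key _ (hp x y)
    have h2 : ∑ x, ∑ y, ((p x y) ^ q - p x y) / (2 * k)
        = ((∑ x, ∑ y, (p x y) ^ q) - ∑ x, ∑ y, p x y) / (2 * k) := by
      simp only [sub_div, Finset.sum_sub_distrib, Finset.sum_div]
    have h3 : ∑ x, ∑ y, p x y = 1 := hPsum
    rw [h1, h2, h3, ← hA]
  have e2 : ∑ x, (P x) ^ (r + k + 1) * lnkr k r (P x) = (B - 1) / (2 * k) := by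
    have h1 : ∑ x, (P x) ^ (r + k + 1) * lnkr k r (P x)
        = ∑ x, ((P x) ^ q - P x) / (2 * k) :=
      Finset.sum_congr rfl fun x _ => key _ (hPpos x)
    have h2 : ∑ x, ((P x) ^ q - P x) / (2 * k)
        = ((∑ x, (P x) ^ q) - ∑ x, P x) / (2 * k) := by
      simp only [sub_div, Finset.sum_sub_distrib, Finset.sum_div]
    rw [h1, h2, hPsum, ← hB]
  have e3 : ∑ y, (Q y) ^ (r + k + 1) * lnkr k r (Q y) = (C - 1) / (2 * k) := by
    have h1 : ∑ y, (Q y) ^ (r + k + 1) * lnkr k r (Q y)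
        = ∑ y, ((Q y) ^ q - Q y) / (2 * k) :=
      Finset.sum_congr rfl fun y _ => key _ (hQpos y)
    have h2 : ∑ y, ((Q y) ^ q - Q y) / (2 * k)
        = ((∑ y, (Q y) ^ q) - ∑ y, Q y) / (2 * k) := by
      simp only [sub_div, Finset.sum_sub_distrib, Finset.sum_div]
    rw [h1, h2, hQsum, ← hC]
  show -∑ x, ∑ y, (p x y) ^ (r + k + 1) * lnkr k r (p x y) ≤
      (-∑ x, (P x) ^ (r + k + 1) * lnkr k r (P x)) +
        (-∑ y, (Q y) ^ (r + k + 1) * lnkr k r (Q y))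
  rw [e1, e2, e3]
  have h2k : (0 : ℝ) < 2 * k := by linarith
  calc -((A - 1) / (2 * k)) = (1 - A) / (2 * k) := by ring
    _ ≤ (2 - B - C) / (2 * k) := (div_le_div_iff_of_pos_right h2k).mpr (by linarith)
    _ = -((B - 1) / (2 * k)) + -((C - 1) / (2 * k)) := by ring
end

section
/- (Nonnegativity of generalized Tsallis relative entropy) For two probability distributions p, q on a finite set with all entries positive, and parameters 0 < k ≤ 1/2, r > 0, the generalized Tsallis relative entropy D_{k,r}(p||q) = -Σ_x p(x) (q(x)/p(x))^(r+k) ln_{k,r}(q(x)/p(x)) = Σ_x p(x)(1 - (q(x)/p(x))^(2k))/(2k) satisfies D_{k,r}(p||q) ≥ 0, with equality when p = q. -/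
/-- Generalized Tsallis relative entropy `D_{k,r}(p‖q)`. -/
noncomputable def Dkr {X : Type*} [Fintype X] (k r : ℝ) (p q : X → ℝ) : ℝ :=
  -∑ x, p x * (q x / p x) ^ (r + k) * lnkr k r (q x / p x)

theorem relative_entropy_nonneg {X : Type*} [Fintype X] (p q : X → ℝ)
    (hp : ∀ x, 0 < p x) (hq : ∀ x, 0 < q x)
    (hpsum : ∑ x, p x = 1) (hqsum : ∑ x, q x = 1)
    (k r : ℝ) (hk0 : 0 < k) (hk : k ≤ 1 / 2) (hr : 0 < r) :
    0 ≤ Dkr k r p q ∧ (p = q → Dkr k r p q = 0) := by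
  have h2k : 0 < 2 * k := by linarith
  have key : ∀ x : X, p x * (q x / p x) ^ (r + k) * lnkr k r (q x / p x)
      = p x * ((q x / p x) ^ (2 * k) - 1) / (2 * k) := by
    intro x
    have ht : 0 < q x / p x := div_pos (hq x) (hp x)
    have hpow : (0:ℝ) < (q x / p x) ^ (r + k) := Real.rpow_pos_of_pos ht _
    unfold lnkr
    field_simp
  constructor
  · unfold Dkr
    rw [Finset.sum_congr rfl fun x _ => key x]
    have hterm : ∀ x : X, p x - q x ≤ -(p x * ((q x / p x) ^ (2 * k) - 1) / (2 * k)) := by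
      intro x
      have ht : 0 < q x / p x := div_pos (hq x) (hp x)
      have hb : (q x / p x) ^ (2 * k) ≤ 1 + 2 * k * (q x / p x - 1) := by
        have := rpow_one_add_le_one_add_mul_self (s := q x / p x - 1)
          (by linarith) (p := 2 * k) h2k.le (by linarith)
        simpa using this
      have hpx := (hp x).le
      rw [← neg_div, le_div_iff₀ h2k]
      have hq' : p x * (q x / p x) = q x := by rw [mul_div_assoc'] ; exact mul_div_cancel_left₀ _ (hp x).ne'
      nlinarith [mul_le_mul_of_nonneg_left hb hpx]
    calc (0:ℝ) = ∑ x, (p x - q x) := by rw [Finset.sum_sub_distrib, hpsum, hqsum]; ring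
      _ ≤ ∑ x, -(p x * ((q x / p x) ^ (2 * k) - 1) / (2 * k)) :=
          Finset.sum_le_sum fun x _ => hterm x
      _ = -∑ x, p x * ((q x / p x) ^ (2 * k) - 1) / (2 * k) := by
          rw [← Finset.sum_neg_distrib]
  · intro hpq
    subst hpq
    unfold Dkr
    have : ∀ x : X, p x * (p x / p x) ^ (r + k) * lnkr k r (p x / p x) = 0 := by
      intro x
      rw [div_self (hp x).ne']
      simp [lnkr]
    rw [Finset.sum_congr rfl fun x _ => this x]
    simp
end

section
/- (Pseudo-additivity of relative entropy) For probability distributions p1, q1 on a finite set X and p2, q2 on a finite set Y (all entries positive), the generalized Tsallis relative entropy of the product distributions satisfies D_{k,r}(p1 ⊗ p2 || q1 ⊗ q2) = D_{k,r}(p1||q1) + D_{k,r}(p2||q2) - 2k D_{k,r}(p1||q1) D_{k,r}(p2||q2), where (p1 ⊗ p2)(x,y) = p1(x)p2(y). -/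
lemma Dkr_eq {X : Type*} [Fintype X] (k r : ℝ) (hk : k ≠ 0) (p q : X → ℝ)
    (hp : ∀ x, 0 < p x) (hq : ∀ x, 0 < q x) (hps : ∑ x, p x = 1) :
    Dkr k r p q = (1 - ∑ x, p x * (q x / p x) ^ (2 * k)) / (2 * k) := by
  have key : ∀ x, p x * (q x / p x) ^ (r + k) * lnkr k r (q x / p x)
      = (p x * (q x / p x) ^ (2 * k) - p x) / (2 * k) := by
    intro x
    have ht : (q x / p x) ^ (r + k) ≠ 0 :=
      (Real.rpow_pos_of_pos (div_pos (hq x) (hp x)) _).ne'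
    unfold lnkr
    field_simp
  simp only [Dkr, key, ← Finset.sum_div, Finset.sum_sub_distrib, hps]
  ring

theorem pseudo_additivity_relative_entropy {X Y : Type*} [Fintype X] [Fintype Y]
    (p₁ q₁ : X → ℝ) (p₂ q₂ : Y → ℝ)
    (hp₁ : ∀ x, 0 < p₁ x) (hq₁ : ∀ x, 0 < q₁ x) (hp₂ : ∀ y, 0 < p₂ y) (hq₂ : ∀ y, 0 < q₂ y)
    (hp₁s : ∑ x, p₁ x = 1) (hq₁s : ∑ x, q₁ x = 1) (hp₂s : ∑ y, p₂ y = 1) (hq₂s : ∑ y, q₂ y = 1)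
    (k r : ℝ) (hk : k ≠ 0) :
    Dkr k r (fun xy : X × Y => p₁ xy.1 * p₂ xy.2) (fun xy : X × Y => q₁ xy.1 * q₂ xy.2) =
      Dkr k r p₁ q₁ + Dkr k r p₂ q₂ - 2 * k * Dkr k r p₁ q₁ * Dkr k r p₂ q₂ := by
  have hps : ∑ xy : X × Y, p₁ xy.1 * p₂ xy.2 = 1 := by
    rw [Fintype.sum_prod_type]
    simp only [← Finset.mul_sum, hp₂s, mul_one, hp₁s]
  rw [Dkr_eq k r hk (fun xy : X × Y => p₁ xy.1 * p₂ xy.2) (fun xy : X × Y => q₁ xy.1 * q₂ xy.2) (fun xy => mul_pos (hp₁ xy.1) (hp₂ xy.2))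
      (fun xy => mul_pos (hq₁ xy.1) (hq₂ xy.2)) hps,
    Dkr_eq k r hk _ _ hp₁ hq₁ hp₁s, Dkr_eq k r hk _ _ hp₂ hq₂ hp₂s]
  have hsum : ∑ xy : X × Y, p₁ xy.1 * p₂ xy.2 * (q₁ xy.1 * q₂ xy.2 / (p₁ xy.1 * p₂ xy.2)) ^ (2 * k)
      = (∑ x, p₁ x * (q₁ x / p₁ x) ^ (2 * k)) * (∑ y, p₂ y * (q₂ y / p₂ y) ^ (2 * k)) := by
    rw [Fintype.sum_prod_type, Finset.sum_mul_sum]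
    refine Finset.sum_congr rfl fun x _ => Finset.sum_congr rfl fun y _ => ?_
    simp only []
    rw [← div_mul_div_comm, Real.mul_rpow (div_pos (hq₁ x) (hp₁ x)).le (div_pos (hq₂ y) (hp₂ y)).le]
    ring
  rw [hsum]
  field_simp
  ring
end
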